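/- For the homogeneous cubic map H = (0, 0, x₁³, x₁²x₂, x₁x₂², x₃x₂² − 2x₄x₁x₂ + x₅x₁²) in dimension 6 over ℚ, the Jacobian JH satisfies (JH)² = 0, but (JH)|_{x=y}·(JH)|_{x=z} ≠ 0 for fresh indeterminate 6-tuples y, z, and (JH)|_{x=w}·(JH)|_{x=y}·(JH)|_{x=z} = 0; i.e., JH has nilpotency index 2 and strong nilpotency index 3. -/

import Mathlib

/-!
Give `x₁, x₂` level 0, `x₃, x₄, x₅` level 1 and `x₆` level 2. Each `Hᵢ` only involves variables
of level strictly below that of `xᵢ`, so every specialisation of `JH` strictly lowers the level,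
and a product of three specialisations vanishes. `(JH)² = 0` and `JH(y) JH(z) ≠ 0` are direct
computations: the `(6, 1)` entry of `JH(y) JH(z)` is `3y₂²z₁² − 4y₁y₂z₁z₂ + y₁²z₂²`, which vanishes
on the diagonal `y = z` but not identically.
-/

open MvPolynomial

/-- Substitute the `i`-th fresh tuple of indeterminates for `x` in every entry of `M`. -/
noncomputable def substN {K : Type} [CommRing K] {n m : ℕ}
    (M : Matrix (Fin m) (Fin m) (MvPolynomial (Fin n) K)) (i : ℕ) :
    Matrix (Fin m) (Fin m) (MvPolynomial (ℕ × Fin n) K) :=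
  M.map (rename fun k => (i, k))

/-- The Jacobian matrix `(∂H_i/∂x_j)` of a polynomial map `H`. -/
noncomputable def jac {K : Type} [CommRing K] {n : ℕ}
    (H : Fin n → MvPolynomial (Fin n) K) :
    Matrix (Fin n) (Fin n) (MvPolynomial (Fin n) K) :=
  Matrix.of fun i j => pderiv j (H i)

/-- The homogeneous cubic map
`H = (0, 0, x₁³, x₁²x₂, x₁x₂², x₃x₂² − 2x₄x₁x₂ + x₅x₁²)` in dimension 6 over ℚ. -/
noncomputable def H9 : Fin 6 → MvPolynomial (Fin 6) ℚ :=
  ![0, 0, X 0 ^ 3, X 0 ^ 2 * X 1, X 0 * X 1 ^ 2,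
    X 2 * X 1 ^ 2 - 2 * X 3 * X 0 * X 1 + X 4 * X 0 ^ 2]

namespace Matrix

variable {ι R : Type*}

def LowersLevelBy [Zero R] (M : Matrix ι ι R) (ℓ : ι → ℕ) (d : ℕ) : Prop :=
  ∀ i j, ℓ i < ℓ j + d → M i j = 0

theorem LowersLevelBy.mul [Fintype ι] [NonUnitalNonAssocSemiring R] {A B : Matrix ι ι R}
    {ℓ : ι → ℕ} {a b : ℕ} (hA : A.LowersLevelBy ℓ a) (hB : B.LowersLevelBy ℓ b) :
    (A * B).LowersLevelBy ℓ (a + b) := by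
  intro i j hij
  rw [mul_apply]
  refine Finset.sum_eq_zero fun k _ => ?_
  by_cases hik : ℓ i < ℓ k + a
  · rw [hA i k hik, zero_mul]
  · rw [hB k j (by omega), mul_zero]

theorem LowersLevelBy.map {S : Type*} [Zero R] [Zero S] {M : Matrix ι ι R} {ℓ : ι → ℕ} {d : ℕ}
    (hM : M.LowersLevelBy ℓ d) {f : R → S} (hf : f 0 = 0) : (M.map f).LowersLevelBy ℓ d :=
  fun i j hij => by rw [map_apply, hM i j hij, hf]

theorem LowersLevelBy.eq_zero [Zero R] {M : Matrix ι ι R} {ℓ : ι → ℕ} {d : ℕ}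
    (hM : M.LowersLevelBy ℓ d) (hℓ : ∀ i, ℓ i < d) : M = 0 :=
  ext fun i j => hM i j (by have := hℓ i; omega)

end Matrix

theorem Derivation.map_ofNat {R A M : Type*} [CommSemiring R] [CommSemiring A] [Algebra R A]
    [AddCommMonoid M] [Module A M] [Module R M] (D : Derivation R A M) (n : ℕ) [n.AtLeastTwo] :
    D (ofNat(n) : A) = 0 :=
  D.map_natCast n

theorem jac_lowersLevelBy_one {K : Type} [CommRing K] {n : ℕ} {H : Fin n → MvPolynomial (Fin n) K}
    {ℓ : Fin n → ℕ} (hH : ∀ i, H i ∈ supported K {j | ℓ j < ℓ i}) :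
    (jac H).LowersLevelBy ℓ 1 := by
  intro i j hij
  refine pderiv_eq_zero_of_notMem_vars fun hj => ?_
  have hji : ℓ j < ℓ i := mem_supported.mp (hH i) hj
  omega

def H9.level : Fin 6 → ℕ := ![0, 0, 1, 1, 1, 2]

theorem H9_mem_supported (i : Fin 6) : H9 i ∈ supported ℚ {j | H9.level j < H9.level i} := by
  fin_cases i <;> simp only [H9] <;>
    repeat' first
      | apply pow_mem | apply add_mem | apply sub_mem | apply mul_mem | apply ofNat_mem
      | apply zero_mem | exact X_mem_supported.mpr (by decide)

theorem jac_H9 : jac H9 =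
    !![0, 0, 0, 0, 0, 0;
       0, 0, 0, 0, 0, 0;
       3 * X 0 ^ 2, 0, 0, 0, 0, 0;
       2 * X 0 * X 1, X 0 ^ 2, 0, 0, 0, 0;
       X 1 ^ 2, 2 * X 0 * X 1, 0, 0, 0, 0;
       2 * X 4 * X 0 - 2 * X 3 * X 1, 2 * X 2 * X 1 - 2 * X 3 * X 0, X 1 ^ 2, -2 * X 0 * X 1,
         X 0 ^ 2, 0] := by
  ext i j : 1
  fin_cases i <;> fin_cases j <;> simp [jac, H9, pderiv_X, Derivation.map_ofNat] <;> ring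

theorem jac_H9_mul_self : jac H9 * jac H9 = 0 := by
  ext i j : 1
  fin_cases i <;> fin_cases j <;> simp [jac_H9, Matrix.mul_apply, Fin.sum_univ_succ] <;> ring

theorem substN_jac_H9_mul_apply :
    (substN (jac H9) 1 * substN (jac H9) 0) 5 0 =
      3 * X (1, 1) ^ 2 * X (0, 0) ^ 2 - 4 * X (1, 0) * X (1, 1) * X (0, 0) * X (0, 1)
        + X (1, 0) ^ 2 * X (0, 1) ^ 2 := by
  simp only [substN, jac_H9, Fin.isValue, neg_mul, Matrix.mul_apply, Matrix.map_apply,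
    Matrix.of_apply, Matrix.cons_val', Matrix.cons_val_fin_one, Matrix.cons_val, Matrix.cons_val_one,
    Matrix.cons_val_zero, Fin.sum_univ_succ, map_sub, map_mul, map_ofNat, rename_X, rename_zero,
    mul_zero, Matrix.cons_val_succ, map_pow, map_neg, Finset.univ_unique, Fin.default_eq_zero,
    zero_mul, Finset.sum_const_zero, add_zero, zero_add]
  ring

theorem substN_jac_H9_mul_ne_zero : substN (jac H9) 1 * substN (jac H9) 0 ≠ 0 := by
  intro h
  -- at y = e₂, z = e₁ the (6, 1) entry is 3
  have := congr_arg (eval fun p => if p = (1, 1) ∨ p = (0, 0) then (1 : ℚ) else 0)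
    (congr_fun₂ h 5 0)
  simp [substN_jac_H9_mul_apply] at this

theorem stmt9 :
    jac H9 * jac H9 = 0 ∧
    substN (jac H9) 1 * substN (jac H9) 0 ≠ 0 ∧
    substN (jac H9) 2 * substN (jac H9) 1 * substN (jac H9) 0 = 0 := by
  refine ⟨jac_H9_mul_self, substN_jac_H9_mul_ne_zero, ?_⟩
  have hJ : ∀ k, (substN (jac H9) k).LowersLevelBy H9.level 1 :=
    fun k => (jac_lowersLevelBy_one H9_mem_supported).map (map_zero _)
  exact (((hJ 2).mul (hJ 1)).mul (hJ 0)).eq_zero (by decide)
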